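/- Fix integers 1 ≤ p ≤ m ≤ n, set κ = (2n - m)/m, let ε > 0, ρ ≥ 0, and let λ ∈ ℝ^n have first entry 8f'(ρ) + 4ρ f''(ρ) and remaining entries 8f'(ρ), where f(ρ) = -(ρ+ε)^{-κ}. Then S_p(λ) = 8^p κ^p binom(n,p) · (ε + (1 - p/m)ρ) · (ρ + ε)^{-((κ+1)p + 1)}; in particular S_p(λ) ≥ 0 for all 1 ≤ p ≤ m. Hence the vector λ lies in the closed cone Γ̄_m, i.e. the function -(|q|^2 + ε)^{-κ} is quaternionic m-subharmonic. -/

import Mathlib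

/-- The `p`-th elementary symmetric polynomial of `lam : Fin n → ℝ`. -/
noncomputable def esymm (n p : ℕ) (lam : Fin n → ℝ) : ℝ :=
  ∑ T ∈ Finset.univ.powersetCard p, ∏ i ∈ T, lam i

/-- The Gårding cone `Γ_m = {λ : S_1(λ) > 0, …, S_m(λ) > 0}`. -/
def gammaCone (n m : ℕ) : Set (Fin n → ℝ) :=
  {lam | ∀ p, 1 ≤ p → p ≤ m → 0 < esymm n p lam}

lemma esymm_two_val (k q : ℕ) (a b : ℝ) :
    esymm (k+1) (q+1) (fun i => if (i:ℕ) = 0 then b else a)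
      = (k.choose (q+1) : ℝ) * a ^ (q+1) + (k.choose q : ℝ) * (b * a ^ q) := by
  classical
  have h0 : (Finset.univ : Finset (Fin (k+1))) = insert 0 ((Finset.univ).erase 0) := by
    simp [Finset.insert_erase]
  have hcard : ((Finset.univ : Finset (Fin (k+1))).erase 0).card = k := by
    simp
  unfold esymm
  rw [h0, Finset.powersetCard_succ_insert (Finset.notMem_erase _ _)]
  have hdisj : Disjoint (((Finset.univ : Finset (Fin (k+1))).erase 0).powersetCard (q+1))
      ((((Finset.univ : Finset (Fin (k+1))).erase 0).powersetCard q).image (insert 0)) := by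
    rw [Finset.disjoint_left]
    rintro T hT hT'
    obtain ⟨S, hS, rfl⟩ := Finset.mem_image.mp hT'
    have := (Finset.mem_powersetCard.mp hT).1 (Finset.mem_insert_self 0 S)
    exact (Finset.notMem_erase _ _) this
  rw [Finset.sum_union hdisj]
  have key : ∀ T ∈ ((Finset.univ : Finset (Fin (k+1))).erase 0).powersetCard (q+1),
      (∏ i ∈ T, (if (i:ℕ) = 0 then b else a)) = a ^ (q+1) := by
    intro T hT
    obtain ⟨hsub, hc⟩ := Finset.mem_powersetCard.mp hT
    rw [Finset.prod_congr rfl (fun i hi => ?_), Finset.prod_const, hc]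
    have hne : (i:ℕ) ≠ 0 := by
      exact fun h => Finset.ne_of_mem_erase (hsub hi) (Fin.ext (by rw [h, Fin.val_zero]))
    simp [hne]
  rw [Finset.sum_congr rfl key, Finset.sum_const, Finset.card_powersetCard, hcard]
  have hinj : ∀ T₁ ∈ ((Finset.univ : Finset (Fin (k+1))).erase 0).powersetCard q,
      ∀ T₂ ∈ ((Finset.univ : Finset (Fin (k+1))).erase 0).powersetCard q,
      insert 0 T₁ = insert 0 T₂ → T₁ = T₂ := by
    intro T₁ h₁ T₂ h₂ he
    have n₁ : (0 : Fin (k+1)) ∉ T₁ := fun h => (Finset.notMem_erase _ _)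
      ((Finset.mem_powersetCard.mp h₁).1 h)
    have n₂ : (0 : Fin (k+1)) ∉ T₂ := fun h => (Finset.notMem_erase _ _)
      ((Finset.mem_powersetCard.mp h₂).1 h)
    rw [← Finset.erase_insert n₁, ← Finset.erase_insert n₂, he]
  rw [Finset.sum_image hinj]
  have key2 : ∀ T ∈ ((Finset.univ : Finset (Fin (k+1))).erase 0).powersetCard q,
      (∏ i ∈ insert 0 T, (if (i:ℕ) = 0 then b else a)) = b * a ^ q := by
    intro T hT
    obtain ⟨hsub, hc⟩ := Finset.mem_powersetCard.mp hT
    have n₀ : (0 : Fin (k+1)) ∉ T := fun h => (Finset.notMem_erase _ _) (hsub h)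
    rw [Finset.prod_insert n₀]
    simp only [Fin.val_zero, if_pos rfl]
    congr 1
    rw [Finset.prod_congr rfl (fun i hi => ?_), Finset.prod_const, hc]
    have hne : (i:ℕ) ≠ 0 := by
      exact fun h => Finset.ne_of_mem_erase (hsub hi) (Fin.ext (by rw [h, Fin.val_zero]))
    simp [hne]
  rw [Finset.sum_congr rfl key2, Finset.sum_const, Finset.card_powersetCard, hcard]
  ring

/-- The eigenvalue vector of the quaternionic Hessian of `-(|q|²+ε)^{-κ_m}` satisfies
`S_p(λ) = 8^p κ^p binom(n,p) (ε + (1 - p/m)ρ)(ρ+ε)^{-((κ+1)p+1)} ≥ 0` for `1 ≤ p ≤ m`,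
hence `λ ∈ Γ̄_m`, i.e. the function is quaternionic `m`-subharmonic. -/
theorem fundamental_solution_m_subharmonic (n m : ℕ) (hm1 : 1 ≤ m) (hmn : m ≤ n)
    (ε ρ : ℝ) (hε : 0 < ε) (hρ : 0 ≤ ρ) :
    let κ : ℝ := (2 * n - m) / m
    let f' : ℝ := κ * (ρ + ε) ^ (-(κ + 1))
    let f'' : ℝ := -κ * (κ + 1) * (ρ + ε) ^ (-(κ + 2))
    let lam : Fin n → ℝ := fun i => if (i : ℕ) = 0 then 8 * f' + 4 * ρ * f'' else 8 * f'
    (∀ p : ℕ, 1 ≤ p → p ≤ m →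
        esymm n p lam =
          8 ^ p * κ ^ p * (n.choose p : ℝ) * (ε + (1 - (p : ℝ) / m) * ρ) *
            (ρ + ε) ^ (-((κ + 1) * p + 1)) ∧
        0 ≤ esymm n p lam) ∧
      lam ∈ closure (gammaCone n m) := by
  intro κ f' f'' lam
  obtain ⟨k, rfl⟩ : ∃ k, n = k + 1 := ⟨n - 1, by omega⟩
  have hκdef' : κ = (2 * ((k+1:ℕ):ℝ) - m) / m := rfl
  have hf' : f' = κ * (ρ+ε) ^ (-(κ+1)) := rfl
  have hf'' : f'' = -κ * (κ+1) * (ρ+ε) ^ (-(κ+2)) := rfl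
  have hlam : lam = fun i : Fin (k+1) => if (i:ℕ) = 0 then (8*f' + 4*ρ*f'') else 8*f' := rfl
  clear_value κ f' f'' lam
  have hm0 : (0:ℝ) < m := by exact_mod_cast hm1
  have hmn' : (m:ℝ) ≤ ((k+1:ℕ):ℝ) := by exact_mod_cast hmn
  have hκdef : κ = (2 * ((k+1:ℕ):ℝ) - m) / m := hκdef'
  have hκ : 0 < κ := by
    rw [hκdef]; exact div_pos (by linarith) hm0
  have ht : 0 < ρ + ε := by linarith
  have hkap : κ + 1 = 2 * ((k+1:ℕ):ℝ) / m := by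
    rw [hκdef]; field_simp; ring
  have key : ∀ p : ℕ, 1 ≤ p → p ≤ m →
      esymm (k+1) p lam =
        8 ^ p * κ ^ p * ((k+1).choose p : ℝ) * (ε + (1 - (p : ℝ) / m) * ρ) *
          (ρ + ε) ^ (-((κ + 1) * p + 1)) := by
    intro p hp1 hpm
    obtain ⟨q, rfl⟩ : ∃ q, p = q + 1 := ⟨p - 1, by omega⟩
    rw [hlam, esymm_two_val]
    set X := (ρ+ε) ^ (-(κ+1)) with hX
    set Y := (ρ+ε) ^ (-(κ+2)) with hY
    set E := (ρ+ε) ^ (-((κ+1)*(((q+1:ℕ)):ℝ)+1)) with hE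
    have hA : X ^ (q+1) = E * (ρ+ε) := by
      have h1 : X ^ (q+1) = (ρ+ε) ^ (-(κ+1) * (((q+1:ℕ)):ℝ)) := by
        rw [hX, ← Real.rpow_natCast _ (q+1), ← Real.rpow_mul ht.le]
      have h2 : E * (ρ+ε) = (ρ+ε) ^ (-((κ+1)*(((q+1:ℕ)):ℝ)+1) + 1) := by
        rw [Real.rpow_add ht, Real.rpow_one, hE]
      rw [h1, h2]; congr 1; push_cast; ring
    have hB : X ^ q * Y = E := by
      rw [hX, hY, ← Real.rpow_natCast _ q, ← Real.rpow_mul ht.le, ← Real.rpow_add ht, hE]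
      congr 1; push_cast; ring
    have e2 : (8*f'+4*ρ*f'')*(8*f')^q
        = (8*κ)^(q+1) * X^(q+1) - 4*ρ*κ*(κ+1)*(8*κ)^q * (X^q * Y) := by
      rw [hf', hf'']; ring
    have e1 : (8*f')^(q+1) = (8*κ)^(q+1) * X^(q+1) := by
      rw [hf']; ring
    rw [e1, e2, hA, hB]
    have hCsum : (((k+1).choose (q+1) : ℕ) : ℝ) = (k.choose (q+1) : ℝ) + (k.choose q : ℝ) := by
      rw [Nat.choose_succ_succ']; push_cast; ring
    have hrel : (((k+1).choose (q+1) : ℕ) : ℝ) * ((q:ℝ)+1) = (k.choose q : ℝ) * ((k:ℝ)+1) := by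
      have := Nat.add_one_mul_choose_eq k q
      have : ((k+1) * k.choose q : ℕ) = ((k+1).choose (q+1) * (q+1) : ℕ) := this
      have h := congrArg (fun x : ℕ => (x : ℝ)) this
      push_cast at h
      linarith
    rw [hCsum] at hrel
    rw [hkap, hCsum]
    push_cast
    push_cast at hrel
    linear_combination (8^(q+1)*κ^(q+1)*E*ρ/m) * hrel
  have hposRHS : ∀ p : ℕ, 1 ≤ p → p ≤ m →
      0 < 8 ^ p * κ ^ p * ((k+1).choose p : ℝ) * (ε + (1 - (p : ℝ) / m) * ρ) *
          (ρ + ε) ^ (-((κ + 1) * p + 1)) := by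
    intro p h1 h2
    have hc : 0 < (((k+1).choose p : ℕ) : ℝ) := by
      exact_mod_cast Nat.choose_pos (le_trans h2 hmn)
    have hpm : (p:ℝ) ≤ m := by exact_mod_cast h2
    have h4 : 0 ≤ 1 - (p:ℝ)/m := by
      rw [sub_nonneg, div_le_one hm0]; exact hpm
    have h3 : 0 < ε + (1 - (p:ℝ)/m) * ρ := by nlinarith [mul_nonneg h4 hρ]
    have h5 : 0 < (ρ+ε) ^ (-((κ+1)*p+1)) := Real.rpow_pos_of_pos ht _
    exact mul_pos (mul_pos (mul_pos (mul_pos (pow_pos (by norm_num) p) (pow_pos hκ p)) hc) h3) h5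
  refine ⟨fun p h1 h2 => ⟨key p h1 h2, by rw [key p h1 h2]; exact (hposRHS p h1 h2).le⟩, ?_⟩
  exact subset_closure (fun p h1 h2 => by rw [key p h1 h2]; exact hposRHS p h1 h2)
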